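/- arXiv:1512.01348 — 3 statements merged into one kernel-verified Lean document; each statement's English description precedes it below -/
import Mathlib

section
/- For every integer k, the set 𝓗 ∩ [0, k] is finite, where 𝓗 is the set of all entropies of finite simple graphs. -/
noncomputable section

/-- `g : [q]^V → [q]` depends essentially on coordinate `u`: there exist two inputs that
differ only at coordinate `u` on which `g` takes different values. -/
def DependsEssentiallyOn {V : Type*} {q : ℕ} (g : (V → Fin q) → Fin q) (u : V) : Prop :=
  ∃ a b : V → Fin q, (∀ w, w ≠ u → a w = b w) ∧ g a ≠ g b

/-- The interaction graph of `f` is contained in the simple graph `G`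
(viewed as the symmetric loopless digraph with arcs `(u,v)` and `(v,u)` for every edge `uv`). -/
def IGLe {V : Type*} {q : ℕ} (G : SimpleGraph V) (f : (V → Fin q) → (V → Fin q)) : Prop :=
  ∀ u v : V, DependsEssentiallyOn (fun x => f x v) u → G.Adj u v

/-- The `q`-ary guessing number of a simple graph `G`: the maximum of `log_q |Fix(f)|`
over all `f` whose interaction graph is contained in `G`. -/
def guessing {V : Type*} (G : SimpleGraph V) (q : ℕ) : ℝ :=
  sSup {x : ℝ | ∃ f : (V → Fin q) → (V → Fin q),
    IGLe G f ∧ x = Real.logb q (Set.ncard {p : V → Fin q | f p = p})}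

/-- The entropy of a simple graph: the supremum over `q ≥ 2` of its `q`-guessing numbers. -/
def graphEntropy {V : Type*} (G : SimpleGraph V) : ℝ :=
  sSup {x : ℝ | ∃ q : ℕ, 2 ≤ q ∧ x = guessing G q}

/-- The set of all entropies of finite simple graphs. -/
def entropySet : Set ℝ := {x : ℝ | ∃ (n : ℕ) (G : SimpleGraph (Fin n)), graphEntropy G = x}

/-- A finite simple graph is entropy-minimal if no simple graph with fewer vertices has the same
fractional part of the entropy. -/
def EntropyMinimal {n : ℕ} (G : SimpleGraph (Fin n)) : Prop :=
  ∀ m : ℕ, m < n → ∀ G' : SimpleGraph (Fin m),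
    Int.fract (graphEntropy G') ≠ Int.fract (graphEntropy G)

/-!
A maximal matching with `ν` edges lets the two ends of each edge copy each other, so
`ν ≤ H(G)`, and its `2ν` endpoints form a vertex cover `C`. The vertices outside `C` have their
neighbourhoods inside `C`, so if `H(G) ≤ K` and more than `2K + 2K·2^(2K)` vertices are not
isolated, pigeonhole gives a vertex `w` with at least `|C| ≥ deg w` twins. Deleting the edges at
such a `w` changes no guessing number: the twins can store the values on `N(w)`, from which every
other vertex recomputes what `w` and its twins would have guessed. Isolated vertices do not matter
either, so every entropy in `[0, K]` is the entropy of a graph on at most `2K + 2K·2^(2K)`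
vertices, and there are finitely many such graphs.
-/
open Function Set Real

section Dependence

variable {V : Type*} {q : ℕ}

lemma DependsOn.mem_of_dependsEssentiallyOn {g : (V → Fin q) → Fin q} {s : Set V}
    (hg : DependsOn g s) {u : V} (hu : DependsEssentiallyOn g u) : u ∈ s := by
  by_contra hus
  obtain ⟨a, b, hab, hne⟩ := hu
  exact hne (hg fun i hi => hab i (ne_of_mem_of_not_mem hi hus))

lemma dependsOn_of_not_dependsEssentiallyOn [Finite V] {g : (V → Fin q) → Fin q} {s : Set V}
    (h : ∀ u ∉ s, ¬ DependsEssentiallyOn g u) : DependsOn g s := by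
  classical
  have key : ∀ t : Finset V, ∀ a b : V → Fin q, (∀ i ∈ s, a i = b i) →
      (∀ i ∉ t, a i = b i) → g a = g b := by
    intro t
    induction t using Finset.induction_on with
    | empty => exact fun a b _ hab => congrArg g (funext fun i => hab i (Finset.notMem_empty i))
    | insert u t hut ih =>
      intro a b hs hab
      have hstep : g a = g (update a u (b u)) := by
        by_cases hu : u ∈ s
        · rw [← hs u hu, update_eq_self]
        · by_contra hne
          exact h u hu ⟨a, _, fun i hi => (update_of_ne hi _ a).symm, hne⟩
      refine hstep.trans (ih _ _ (fun i hi => ?_) fun i hi => ?_)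
      · rcases eq_or_ne i u with rfl | hiu
        · exact update_self ..
        · rw [update_of_ne hiu, hs i hi]
      · rcases eq_or_ne i u with rfl | hiu
        · exact update_self ..
        · rw [update_of_ne hiu]
          exact hab i (by simp [hiu, hi])
  have := Fintype.ofFinite V
  exact fun a b hs => key Finset.univ a b hs (by simp)

lemma igLe_iff_dependsOn [Finite V] {G : SimpleGraph V} {f : (V → Fin q) → V → Fin q} :
    IGLe G f ↔ ∀ v, DependsOn (fun x => f x v) {u | G.Adj u v} :=
  ⟨fun hf v => dependsOn_of_not_dependsEssentiallyOn fun u hu hd => hu (hf u v hd),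
    fun hf _ v hd => (hf v).mem_of_dependsEssentiallyOn hd⟩

lemma igLe_const [NeZero q] (G : SimpleGraph V) : IGLe G fun (_ : V → Fin q) _ => 0 :=
  fun _ _ ⟨_, _, _, hne⟩ => (hne rfl).elim

end Dependence

lemma Real.logb_pow_self {b : ℝ} (hb : 1 < b) (n : ℕ) : logb b (b ^ n) = n := by
  rw [logb_pow, logb_self_eq_one hb, mul_one]

lemma Real.logb_natCast_le_logb_natCast {b : ℝ} (hb : 1 < b) {m n : ℕ} (h : m ≤ n) :
    logb b m ≤ logb b n := by
  rcases m.eq_zero_or_pos with rfl | hm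
  · rw [Nat.cast_zero, Real.logb_zero, ← Real.log_div_log]
    exact div_nonneg (Real.log_natCast_nonneg n) (Real.log_nonneg hb.le)
  · exact Real.logb_le_logb_of_le hb (by exact_mod_cast hm) (by exact_mod_cast h)

section Guessing

variable {V : Type*} [Finite V] {q : ℕ} {G : SimpleGraph V}

lemma logb_ncard_fixedPoints_le_card (hq : 2 ≤ q) (f : (V → Fin q) → V → Fin q) :
    logb q (fixedPoints f).ncard ≤ Nat.card V := by
  have hq1 : (1 : ℝ) < q := by exact_mod_cast hq
  have hle : (fixedPoints f).ncard ≤ q ^ Nat.card V := by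
    simpa [Nat.card_fun] using Set.ncard_le_card (fixedPoints f)
  calc logb q (fixedPoints f).ncard ≤ logb q (q ^ Nat.card V : ℕ) :=
        Real.logb_natCast_le_logb_natCast hq1 hle
    _ = Nat.card V := by rw [Nat.cast_pow, Real.logb_pow_self hq1]

lemma guessing_set_bddAbove (hq : 2 ≤ q) :
    BddAbove {x : ℝ | ∃ f : (V → Fin q) → (V → Fin q),
      IGLe G f ∧ x = logb q (Set.ncard {p : V → Fin q | f p = p})} :=
  ⟨Nat.card V, by rintro _ ⟨f, -, rfl⟩; exact logb_ncard_fixedPoints_le_card hq f⟩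

lemma logb_ncard_fixedPoints_le_guessing (hq : 2 ≤ q) {f : (V → Fin q) → V → Fin q}
    (hf : IGLe G f) : logb q (fixedPoints f).ncard ≤ guessing G q :=
  le_csSup (guessing_set_bddAbove hq) ⟨f, hf, rfl⟩

lemma le_guessing_of_pow_le_ncard (hq : 2 ≤ q) {f : (V → Fin q) → V → Fin q}
    (hf : IGLe G f) {r : ℕ} (hr : q ^ r ≤ (fixedPoints f).ncard) :
    (r : ℝ) ≤ guessing G q := by
  have hq1 : (1 : ℝ) < q := by exact_mod_cast hq
  calc (r : ℝ) = logb q (q ^ r : ℕ) := by rw [Nat.cast_pow, Real.logb_pow_self hq1]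
    _ ≤ logb q (fixedPoints f).ncard := Real.logb_natCast_le_logb_natCast hq1 hr
    _ ≤ guessing G q := logb_ncard_fixedPoints_le_guessing hq hf

lemma guessing_le_card (hq : 2 ≤ q) : guessing G q ≤ Nat.card V := by
  have : NeZero q := ⟨by omega⟩
  refine csSup_le ⟨_, _, igLe_const G, rfl⟩ ?_
  rintro _ ⟨f, -, rfl⟩
  exact logb_ncard_fixedPoints_le_card hq f

lemma guessing_le_graphEntropy (hq : 2 ≤ q) : guessing G q ≤ graphEntropy G :=
  le_csSup ⟨Nat.card V, by rintro _ ⟨q, hq, rfl⟩; exact guessing_le_card hq⟩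
    ⟨q, hq, rfl⟩

end Guessing

lemma guessing_le_guessing_of_forall {V V' : Type*} [Finite V'] {q : ℕ} {G : SimpleGraph V}
    {G' : SimpleGraph V'} (hq : 2 ≤ q)
    (H : ∀ f : (V → Fin q) → V → Fin q, IGLe G f →
      ∃ f' : (V' → Fin q) → V' → Fin q, IGLe G' f' ∧
        (fixedPoints f).ncard ≤ (fixedPoints f').ncard) :
    guessing G q ≤ guessing G' q := by
  have : NeZero q := ⟨by omega⟩
  refine csSup_le ⟨_, _, igLe_const G, rfl⟩ ?_
  rintro _ ⟨f, hf, rfl⟩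
  obtain ⟨f', hf', hle⟩ := H f hf
  exact (Real.logb_natCast_le_logb_natCast (by exact_mod_cast hq) hle).trans
    (logb_ncard_fixedPoints_le_guessing hq hf')

lemma guessing_mono {V : Type*} [Finite V] {q : ℕ} {G₁ G₂ : SimpleGraph V}
    (h : G₁ ≤ G₂) (hq : 2 ≤ q) : guessing G₁ q ≤ guessing G₂ q :=
  guessing_le_guessing_of_forall hq fun f hf => ⟨f, fun u v hd => h (hf u v hd), le_rfl⟩

lemma graphEntropy_congr {V V' : Type*} {G : SimpleGraph V} {G' : SimpleGraph V'}
    (h : ∀ q, 2 ≤ q → guessing G q = guessing G' q) : graphEntropy G = graphEntropy G' := by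
  unfold graphEntropy
  congr 1
  ext x
  exact exists_congr fun q => and_congr_right fun hq => by rw [h q hq]

section Embedding

variable {V V' : Type*} [Finite V] [Finite V'] {q : ℕ} {G : SimpleGraph V} {G' : SimpleGraph V'}

lemma guessing_le_of_embedding (φ : G' ↪g G) (hq : 2 ≤ q) :
    guessing G' q ≤ guessing G q := by
  have : NeZero q := ⟨by omega⟩
  refine guessing_le_guessing_of_forall hq fun f' hf' => ?_
  refine ⟨fun x => extend φ (f' (x ∘ φ)) 0, ?_, ?_⟩
  · rw [igLe_iff_dependsOn] at hf' ⊢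
    intro v x y hxy
    by_cases hv : ∃ a, φ a = v
    · obtain ⟨a, rfl⟩ := hv
      simp only [φ.injective.extend_apply]
      exact hf' a fun i hi => hxy (φ i) (φ.map_adj_iff.mpr hi)
    · simp only [extend_apply' _ _ _ hv]
  · refine Set.ncard_le_ncard_of_injOn (extend φ · 0) (fun y hy => ?_)
      (fun y₁ _ y₂ _ h => ?_)
    · change extend φ (f' (extend φ y 0 ∘ φ)) 0 = extend φ y 0
      rw [extend_comp φ.injective, hy.eq]
    · rw [← extend_comp φ.injective y₁ 0, ← extend_comp φ.injective y₂ 0]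
      exact congrArg (· ∘ φ) h

lemma guessing_le_of_embedding_of_support_subset (φ : G' ↪g G) (hφ : G.support ⊆ range φ)
    (hq : 2 ≤ q) : guessing G q ≤ guessing G' q := by
  have : NeZero q := ⟨by omega⟩
  refine guessing_le_guessing_of_forall hq fun f hf => ?_
  rw [igLe_iff_dependsOn] at hf
  have hf_range : DependsOn f (range φ) := fun x₁ x₂ h => funext fun v =>
    hf v fun i hi => h i (hφ ⟨v, hi⟩)
  refine ⟨fun y => f (extend φ y 0) ∘ φ, ?_, ?_⟩
  · rw [igLe_iff_dependsOn]
    intro a x y hxy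
    refine hf (φ a) fun i hi => ?_
    obtain ⟨b, rfl⟩ := hφ ⟨φ a, hi⟩
    simp only [φ.injective.extend_apply]
    exact hxy b (φ.map_adj_iff.mp hi)
  · refine Set.ncard_le_ncard_of_injOn (· ∘ φ) (fun x hx => ?_)
      (fun x₁ hx₁ x₂ hx₂ h => ?_)
    · have : f (extend φ (x ∘ φ) 0) = f x := hf_range <| by
        rintro _ ⟨a, rfl⟩
        exact φ.injective.extend_apply _ _ a
      change f (extend φ (x ∘ φ) 0) ∘ φ = x ∘ φ
      rw [this, hx.eq]
    · rw [← hx₁.eq, ← hx₂.eq]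
      exact hf_range <| by
        rintro _ ⟨a, rfl⟩
        exact congrFun h a

lemma guessing_eq_of_embedding_of_support_subset (φ : G' ↪g G) (hφ : G.support ⊆ range φ)
    (hq : 2 ≤ q) : guessing G' q = guessing G q :=
  (guessing_le_of_embedding φ hq).antisymm (guessing_le_of_embedding_of_support_subset φ hφ hq)

end Embedding

lemma exists_graphEntropy_eq_of_support {V : Type*} [Finite V] (G : SimpleGraph V) :
    ∃ G' : SimpleGraph (Fin (Nat.card G.support)), graphEntropy G' = graphEntropy G := by
  let ι : Fin (Nat.card G.support) ↪ V :=
    (Finite.equivFin G.support).symm.toEmbedding.trans (Embedding.subtype _)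
  refine ⟨G.comap ι, graphEntropy_congr fun q hq =>
    guessing_eq_of_embedding_of_support_subset (SimpleGraph.Embedding.comap ι G) ?_ hq⟩
  intro v hv
  exact ⟨Finite.equivFin G.support ⟨v, hv⟩,
    congrArg Subtype.val ((Finite.equivFin G.support).symm_apply_apply ⟨v, hv⟩)⟩

lemma neighborSet_eq_of_mem_insert {V : Type*} {G : SimpleGraph V} {w : V} {S : Set V}
    (htwin : ∀ s ∈ S, G.neighborSet s = G.neighborSet w)
    {p : V} (hp : p ∈ insert w S) : G.neighborSet p = G.neighborSet w := by
  rcases hp with rfl | hp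
  exacts [rfl, htwin p hp]

lemma notMem_insert_of_adj {V : Type*} {G : SimpleGraph V} {w : V} {S : Set V}
    (htwin : ∀ s ∈ S, G.neighborSet s = G.neighborSet w) {ν : V} (hν : G.Adj w ν) :
    ν ∉ insert w S := fun h => G.irrefl <| by
    rw [← SimpleGraph.mem_neighborSet, neighborSet_eq_of_mem_insert htwin h]
    exact hν

section Twin

variable {V : Type*} {q : ℕ} [NeZero q]

open Classical in
def twinEncode (w : V) (S : Set V) (τ : V → V) (x : V → Fin q) : V → Fin q :=
  fun v => if v = w then 0 else if v ∈ S then x (τ v) else x v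

open Classical in
def twinDecode (f : (V → Fin q) → V → Fin q) (w : V) (S : Set V) (ρ : V → V)
    (y : V → Fin q) : V → Fin q :=
  fun i => if i ∈ insert w S then f (y ∘ ρ) i else y i

/-- The twins `S` of `w` store, through `τ`, the values of the neighbours of `w`; from them every
other vertex recomputes what `f` guesses on `insert w S`, while `w` itself guesses a constant. -/
def twinStrategy (f : (V → Fin q) → V → Fin q) (w : V) (S : Set V) (ρ τ : V → V)
    (y : V → Fin q) : V → Fin q :=
  open Classical in
  fun v => if v ∈ insert w S then twinEncode w S τ y v else f (twinDecode f w S ρ y) v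

variable [Finite V] {G : SimpleGraph V} {w : V} {S : Set V} {ρ τ : V → V}
  {f : (V → Fin q) → V → Fin q}

lemma twinDecode_twinEncode (hwS : w ∉ S)
    (htwin : ∀ s ∈ S, G.neighborSet s = G.neighborSet w)
    (hρ : MapsTo ρ (G.neighborSet w) S) (hτρ : LeftInvOn τ ρ (G.neighborSet w))
    (hf : IGLe G f) {x : V → Fin q} (hx : IsFixedPt f x) :
    twinDecode f w S ρ (twinEncode w S τ x) = x := by
  rw [igLe_iff_dependsOn] at hf
  funext i
  by_cases hi : i ∈ insert w S
  · have : f (twinEncode w S τ x ∘ ρ) i = f x i := hf i fun ν hν => by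
      have hν : G.Adj w ν := by
        rw [← SimpleGraph.mem_neighborSet, ← neighborSet_eq_of_mem_insert htwin hi]
        exact hν.symm
      have hρν : ρ ν ≠ w := fun h => hwS (h ▸ hρ hν)
      simp [twinEncode, hρν, hρ hν, hτρ hν]
    simp only [twinDecode, if_pos hi, this, hx.eq]
  · have hiw : i ≠ w := fun h => hi (Or.inl h)
    have hiS : i ∉ S := fun h => hi (Or.inr h)
    simp [twinDecode, twinEncode, hiw, hiS]

lemma isFixedPt_twinStrategy (hwS : w ∉ S)
    (htwin : ∀ s ∈ S, G.neighborSet s = G.neighborSet w)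
    (hρ : MapsTo ρ (G.neighborSet w) S) (hτρ : LeftInvOn τ ρ (G.neighborSet w))
    (hτ : MapsTo τ S (G.neighborSet w)) (hf : IGLe G f) {x : V → Fin q} (hx : IsFixedPt f x) :
    IsFixedPt (twinStrategy f w S ρ τ) (twinEncode w S τ x) := by
  funext v
  by_cases hv : v ∈ insert w S
  · simp only [twinStrategy, if_pos hv]
    rcases hv with rfl | hvS
    · simp [twinEncode]
    · have hτv := notMem_insert_of_adj htwin (hτ hvS)
      have hvw : v ≠ w := fun h => hwS (h ▸ hvS)
      simp only [twinEncode, if_neg hvw, if_pos hvS]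
      simp [(not_or.mp hτv).1, (not_or.mp hτv).2]
  · simp only [twinStrategy, if_neg hv, twinDecode_twinEncode hwS htwin hρ hτρ hf hx, hx.eq]
    simp [twinEncode, (not_or.mp hv).1, (not_or.mp hv).2]

lemma igLe_twinStrategy (hwS : w ∉ S)
    (htwin : ∀ s ∈ S, G.neighborSet s = G.neighborSet w)
    (hρ : MapsTo ρ (G.neighborSet w) S) (hτ : MapsTo τ S (G.neighborSet w)) (hf : IGLe G f) :
    IGLe (G.deleteIncidenceSet w) (twinStrategy f w S ρ τ) := by
  rw [igLe_iff_dependsOn] at hf ⊢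
  intro v y₁ y₂ hy
  replace hy : ∀ i, G.Adj i v → i ≠ w → v ≠ w → y₁ i = y₂ i :=
    fun i h₁ h₂ h₃ => hy i (SimpleGraph.deleteIncidenceSet_adj.mpr ⟨h₁, h₂, h₃⟩)
  by_cases hv : v ∈ insert w S
  · simp only [twinStrategy, if_pos hv]
    rcases hv with rfl | hvS
    · simp [twinEncode]
    · have hvw : v ≠ w := fun h => hwS (h ▸ hvS)
      have hτv := hτ hvS
      rw [← htwin v hvS] at hτv
      simp only [twinEncode, if_neg hvw, if_pos hvS]
      exact hy _ hτv.symm (notMem_insert_of_adj htwin (hτ hvS) <| Or.inl ·) hvw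
  · have hvw : v ≠ w := fun h => hv (Or.inl h)
    simp only [twinStrategy, if_neg hv]
    refine hf v fun i (hiv : G.Adj i v) => ?_
    by_cases hi : i ∈ insert w S
    · simp only [twinDecode, if_pos hi]
      refine hf i fun ν (hνi : G.Adj ν i) => ?_
      have hν : ν ∈ G.neighborSet w := by
        rw [← neighborSet_eq_of_mem_insert htwin hi]
        exact hνi.symm
      refine hy _ ?_ (fun h => hwS (h ▸ hρ hν)) hvw
      rw [← SimpleGraph.mem_neighborSet, htwin _ (hρ hν),
        ← neighborSet_eq_of_mem_insert htwin hi]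
      exact hiv
    · simp only [twinDecode, if_neg hi]
      exact hy i hiv (fun h => hi (Or.inl h)) hvw

end Twin

section TwinGuessing

variable {V : Type*} [Finite V] {q : ℕ} {G : SimpleGraph V} {w : V} {S : Set V}

lemma guessing_le_guessing_deleteIncidenceSet_of_bijOn {ρ : V → V} (hwS : w ∉ S)
    (htwin : ∀ s ∈ S, G.neighborSet s = G.neighborSet w) (hρ : BijOn ρ (G.neighborSet w) S)
    (hq : 2 ≤ q) : guessing G q ≤ guessing (G.deleteIncidenceSet w) q := by
  have : NeZero q := ⟨by omega⟩
  have : Nonempty V := ⟨w⟩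
  set τ := invFunOn ρ (G.neighborSet w)
  have hτρ : LeftInvOn τ ρ (G.neighborSet w) := hρ.invOn_invFunOn.1
  have hτ : MapsTo τ S (G.neighborSet w) := hρ.surjOn.mapsTo_invFunOn
  refine guessing_le_guessing_of_forall hq fun f hf =>
    ⟨twinStrategy f w S ρ τ, igLe_twinStrategy hwS htwin hρ.mapsTo hτ hf, ?_⟩
  refine Set.ncard_le_ncard_of_injOn (twinEncode w S τ)
    (fun x hx => isFixedPt_twinStrategy hwS htwin hρ.mapsTo hτρ hτ hf hx)
    (fun x₁ hx₁ x₂ hx₂ h => ?_)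
  rw [← twinDecode_twinEncode hwS htwin hρ.mapsTo hτρ hf hx₁,
    ← twinDecode_twinEncode hwS htwin hρ.mapsTo hτρ hf hx₂, h]

lemma guessing_deleteIncidenceSet_eq (hwS : w ∉ S)
    (htwin : ∀ s ∈ S, G.neighborSet s = G.neighborSet w)
    (hcard : (G.neighborSet w).ncard ≤ S.ncard) (hq : 2 ≤ q) :
    guessing (G.deleteIncidenceSet w) q = guessing G q := by
  refine (guessing_mono (G.deleteIncidenceSet_le w) hq).antisymm ?_
  have : Nonempty V := ⟨w⟩
  have hle : (G.neighborSet w).encard ≤ S.encard := by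
    rw [← (toFinite _).cast_ncard_eq, ← (toFinite S).cast_ncard_eq]
    exact_mod_cast hcard
  obtain ⟨ρ, hρS, hρ⟩ := (toFinite _).exists_injOn_of_encard_le hle
  have hρS : ρ '' G.neighborSet w ⊆ S := image_subset_iff.mpr hρS
  exact guessing_le_guessing_deleteIncidenceSet_of_bijOn (fun h => hwS (hρS h))
    (fun s hs => htwin s (hρS hs)) hρ.bijOn_image hq

end TwinGuessing

section Matching

variable {V : Type*} [Finite V] {q : ℕ}

lemma exists_involutive_matching_isVertexCover (G : SimpleGraph V) :
    ∃ σ : V → V, Involutive σ ∧ (∀ v, σ v ≠ v → G.Adj v (σ v)) ∧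
      ∀ u v, G.Adj u v → σ u ≠ u ∨ σ v ≠ v := by
  classical
  obtain ⟨σ, ⟨hσ, hadj⟩, hmax⟩ := Set.exists_max_image
    {σ : V → V | Involutive σ ∧ ∀ v, σ v ≠ v → G.Adj v (σ v)}
    (fun σ => {v | σ v ≠ v}.ncard)
    (toFinite _) ⟨id, fun _ => rfl, fun v h => (h rfl).elim⟩
  refine ⟨σ, hσ, hadj, fun u v huv => ?_⟩
  by_contra! h
  obtain ⟨hu, hv⟩ := h
  have hne := G.ne_of_adj huv
  let σ' : V → V := fun x => if x = u then v else if x = v then u else σ x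
  have hσu (x : V) : σ x = u ↔ x = u := ⟨fun h => by rw [← hσ x, h, hu], (· ▸ hu)⟩
  have hσv (x : V) : σ x = v ↔ x = v := ⟨fun h => by rw [← hσ x, h, hv], (· ▸ hv)⟩
  have hσ' : Involutive σ' := fun x => by
    by_cases hxu : x = u <;> by_cases hxv : x = v <;> simp_all [σ', hσ x]
  have hadj' : ∀ x, σ' x ≠ x → G.Adj x (σ' x) := fun x hx => by
    by_cases hxu : x = u <;> by_cases hxv : x = v <;> simp_all [σ', huv.symm]
  have hlt : {x | σ x ≠ x} ⊂ {x | σ' x ≠ x} := by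
    refine ssubset_of_subset_of_ne (fun x (hx : σ x ≠ x) => ?_) fun h => ?_
    · have hxu : x ≠ u := fun h => hx (h ▸ hu)
      have hxv : x ≠ v := fun h => hx (h ▸ hv)
      simpa [σ', hxu, hxv] using hx
    · have : u ∈ {x | σ' x ≠ x} := by simpa [σ'] using hne.symm
      rw [← h] at this
      exact this hu
  exact (Set.ncard_lt_ncard hlt).not_ge (hmax σ' ⟨hσ', hadj'⟩)

lemma ncard_le_two_mul_guessing_of_involutive {G : SimpleGraph V} {σ : V → V}
    (hσ : Involutive σ) (hadj : ∀ v, σ v ≠ v → G.Adj v (σ v)) (hq : 2 ≤ q) :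
    ({v | σ v ≠ v}.ncard : ℝ) ≤ 2 * guessing G q := by
  classical
  have : NeZero q := ⟨by omega⟩
  have : Fintype V := Fintype.ofFinite V
  let M : Finset V := {v | σ v ≠ v}
  let E : Finset (Sym2 V) := M.image fun v => s(v, σ v)
  have hM : {v | σ v ≠ v}.ncard = M.card := by
    rw [← Set.ncard_coe_finset]
    simp [M]
  have hME : M.card ≤ 2 * E.card := by
    refine Finset.card_le_mul_card_image M 2 fun e he => ?_
    obtain ⟨v, -, rfl⟩ := Finset.mem_image.mp he
    calc Finset.card {x ∈ M | s(x, σ x) = s(v, σ v)} ≤ Finset.card {v, σ v} :=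
          Finset.card_le_card fun x hx => by
            obtain ⟨rfl, -⟩ | ⟨rfl, -⟩ := Sym2.eq_iff.mp (Finset.mem_filter.mp hx).2
            all_goals simp
      _ ≤ 2 := Finset.card_le_two
  let f : (V → Fin q) → V → Fin q := fun y x => if σ x = x then 0 else y (σ x)
  have hf : IGLe G f := igLe_iff_dependsOn.mpr fun x y₁ y₂ hy => by
    by_cases hx : σ x = x
    · simp [f, hx]
    · simp only [f, if_neg hx]
      exact hy _ (hadj x hx).symm
  -- each edge `s(x, σ x)` of the matching carries one free symbol, read by both endpoints
  let Ψ (c : E → Fin q) : V → Fin q := fun x =>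
    if σ x = x then 0 else extend Subtype.val c 0 s(x, σ x)
  have hfix (c : E → Fin q) : IsFixedPt f (Ψ c) := funext fun x => by
    by_cases hx : σ x = x
    · simp [f, Ψ, hx]
    · simp only [f, Ψ, if_neg hx, hσ x, if_neg (Ne.symm hx)]
      rw [Sym2.eq_swap]
  have hinj : Injective Ψ := fun c₁ c₂ h => funext fun ⟨e, he⟩ => by
    obtain ⟨v, hv, rfl⟩ := Finset.mem_image.mp he
    have := congrFun h v
    simp only [Ψ, if_neg (Finset.mem_filter.mp hv).2] at this
    rwa [Subtype.val_injective.extend_apply c₁ 0 ⟨_, he⟩,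
      Subtype.val_injective.extend_apply c₂ 0 ⟨_, he⟩] at this
  have hcount : q ^ E.card ≤ (fixedPoints f).ncard :=
    calc q ^ E.card = (univ : Set (E → Fin q)).ncard := by simp
      _ ≤ (fixedPoints f).ncard :=
        Set.ncard_le_ncard_of_injOn Ψ (fun c _ => hfix c) hinj.injOn
  calc ({v | σ v ≠ v}.ncard : ℝ) ≤ 2 * E.card := by rw [hM]; exact_mod_cast hME
    _ ≤ 2 * guessing G q := by
        gcongr
        exact le_guessing_of_pow_le_ncard hq hf hcount

lemma exists_isVertexCover_card_le_two_mul_guessing (G : SimpleGraph V) (hq : 2 ≤ q) :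
    ∃ C : Finset V, (∀ u v, G.Adj u v → u ∈ C ∨ v ∈ C) ∧
      (C.card : ℝ) ≤ 2 * guessing G q := by
  obtain ⟨σ, hσ, hadj, hcover⟩ := exists_involutive_matching_isVertexCover G
  refine ⟨(toFinite {v | σ v ≠ v}).toFinset, fun u v huv => ?_, ?_⟩
  · simpa using hcover u v huv
  · rw [← Set.ncard_eq_toFinset_card]
    exact ncard_le_two_mul_guessing_of_involutive hσ hadj hq

end Matching

section Reduction

variable {V : Type*} [Finite V] {G : SimpleGraph V}

lemma exists_twins_of_isVertexCover {C : Finset V} (hC : ∀ u v, G.Adj u v → u ∈ C ∨ v ∈ C)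
    (hcard : C.card + C.card * 2 ^ C.card < G.support.ncard) :
    ∃ w ∈ G.support, ∃ S : Set V, w ∉ S ∧
      (∀ s ∈ S, G.neighborSet s = G.neighborSet w) ∧ (G.neighborSet w).ncard ≤ S.ncard := by
  classical
  have : Fintype V := Fintype.ofFinite V
  let D : Finset V := G.support.toFinset \ C
  let nbhd (v : V) : Finset V := {u | G.Adj v u}
  have hnbhd (v : V) : (nbhd v : Set V) = G.neighborSet v := by ext; simp [nbhd]
  have hmaps : ∀ v ∈ D, nbhd v ∈ C.powerset := fun v hv => Finset.mem_powerset.mpr fun u hu =>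
    (hC v u (by simpa [nbhd] using hu)).resolve_left (Finset.mem_sdiff.mp hv).2
  have hD : C.powerset.card * C.card < D.card := by
    have hsdiff : G.support.ncard - C.card ≤ D.card := by
      simpa [D, Set.ncard_eq_toFinset_card'] using Finset.le_card_sdiff C G.support.toFinset
    rw [Finset.card_powerset, mul_comm]
    omega
  obtain ⟨N, -, hN⟩ := Finset.exists_lt_card_fiber_of_mul_lt_card_of_maps_to hmaps hD
  obtain ⟨w, hw⟩ := Finset.card_pos.mp (C.card.zero_le.trans_lt hN)
  have hwN : nbhd w = N := (Finset.mem_filter.mp hw).2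
  refine ⟨w, by simpa using (Finset.mem_sdiff.mp (Finset.mem_filter.mp hw).1).1,
    ↑(Finset.filter (fun x => nbhd x = N) D |>.erase w), by simp, fun s hs => ?_, ?_⟩
  · rw [← hnbhd, ← hnbhd, (Finset.mem_filter.mp (Finset.mem_of_mem_erase hs)).2, hwN]
  · rw [← hnbhd, Set.ncard_coe_finset, Set.ncard_coe_finset, Finset.card_erase_of_mem hw]
    have := Finset.card_le_card (Finset.mem_powerset.mp (hmaps w (Finset.mem_filter.mp hw).1))
    omega

lemma exists_graphEntropy_deleteIncidenceSet_eq {K : ℕ} (hK : graphEntropy G ≤ K)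
    (hcard : 2 * K + 2 * K * 2 ^ (2 * K) < G.support.ncard) :
    ∃ w ∈ G.support, graphEntropy (G.deleteIncidenceSet w) = graphEntropy G := by
  obtain ⟨C, hC, hCcard⟩ := exists_isVertexCover_card_le_two_mul_guessing G le_rfl
  have hCK : C.card ≤ 2 * K := by
    have := hCcard.trans (mul_le_mul_of_nonneg_left
      ((guessing_le_graphEntropy le_rfl).trans hK) zero_le_two)
    exact_mod_cast this
  have hCbound : C.card + C.card * 2 ^ C.card ≤ 2 * K + 2 * K * 2 ^ (2 * K) := by
    gcongr
    norm_num
  obtain ⟨w, hw, S, hwS, htwin, hS⟩ := exists_twins_of_isVertexCover hC (hCbound.trans_lt hcard)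
  exact ⟨w, hw, graphEntropy_congr fun q hq => guessing_deleteIncidenceSet_eq hwS htwin hS hq⟩

lemma exists_graphEntropy_eq_support_ncard_le (K : ℕ) (hK : graphEntropy G ≤ K) :
    ∃ G₀ : SimpleGraph V, graphEntropy G₀ = graphEntropy G ∧
      G₀.support.ncard ≤ 2 * K + 2 * K * 2 ^ (2 * K) := by
  induction h : G.support.ncard using Nat.strong_induction_on generalizing G with
  | _ n ih =>
    by_cases hn : n ≤ 2 * K + 2 * K * 2 ^ (2 * K)
    · exact ⟨G, rfl, h ▸ hn⟩
    obtain ⟨w, hw, hG⟩ := exists_graphEntropy_deleteIncidenceSet_eq hK (by omega)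
    have hlt : (G.deleteIncidenceSet w).support.ncard < n := h ▸ Set.ncard_lt_ncard
      ((G.support_deleteIncidenceSet_subset w).trans_ssubset (sdiff_singleton_ssubset.mpr hw))
    obtain ⟨G₀, hG₀, hs⟩ := ih _ hlt (hG ▸ hK) rfl
    exact ⟨G₀, hG₀.trans hG, hs⟩

end Reduction

/-- For every integer `k`, the set of entropies of finite simple graphs in `[0, k]` is finite. -/
theorem entropySet_inter_Icc_finite (k : ℤ) :
    (entropySet ∩ Set.Icc (0 : ℝ) (k : ℝ)).Finite := by
  set K := k.toNat
  refine ((Set.finite_Iic (2 * K + 2 * K * 2 ^ (2 * K))).biUnion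
    fun m _ => Set.finite_range (graphEntropy (V := Fin m))).subset ?_
  rintro x ⟨⟨n, G, rfl⟩, -, hxk⟩
  have hK : graphEntropy G ≤ K := hxk.trans (by exact_mod_cast Int.self_le_toNat k)
  obtain ⟨G₀, hG₀, hs⟩ := exists_graphEntropy_eq_support_ncard_le K hK
  obtain ⟨G', hG'⟩ := exists_graphEntropy_eq_of_support G₀
  exact mem_biUnion (Nat.card_coe_set_eq G₀.support ▸ hs) ⟨G', hG'.trans hG₀⟩

end
end

section
/- Let G = (A, B, E) be a finite bipartite graph with at least one edge and with |A| ≥ |B|. Then there exists a nonempty subset A' ⊆ A such that the bipartite subgraph of G induced between A' and N(A') has a matching saturating N(A'). -/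
open Finset

/-- Let `G = (A, B, E)` be a finite bipartite graph with at least one edge and `|A| ≥ |B|`.
Then there is a nonempty `A' ⊆ A` such that the bipartite subgraph induced between `A'` and
`N(A')` has a matching saturating `N(A')`; such a matching is encoded by a map `g` sending each
vertex of `N(A') = {b | ∃ a ∈ A', E a b}` to a distinct vertex of `A'` adjacent to it. -/
theorem bipartite_exists_saturating_matching
    (A B : Type*) [Fintype A] [Fintype B] (E : A → B → Prop)
    (hedge : ∃ a b, E a b) (hcard : Fintype.card B ≤ Fintype.card A) :
    ∃ A' : Set A, A'.Nonempty ∧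
      ∃ g : B → A,
        (∀ b ∈ {b : B | ∃ a ∈ A', E a b}, g b ∈ A' ∧ E (g b) b) ∧
        Set.InjOn g {b : B | ∃ a ∈ A', E a b} := by
  classical
  obtain ⟨a₀, b₀, hab⟩ := hedge
  set nbhd : Finset A → Finset B := fun s => univ.filter (fun b => ∃ a ∈ s, E a b) with hnbhd
  set fval : Finset A → ℤ := fun s => (nbhd s).card - s.card with hfval
  have hne : ((univ : Finset (Finset A)).filter (fun s => s.Nonempty)).Nonempty :=
    ⟨{a₀}, by simp⟩
  obtain ⟨s₀, hs₀mem, hs₀min⟩ := Finset.exists_min_image _ fval hne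
  have hs₀ne : s₀.Nonempty := (mem_filter.mp hs₀mem).2
  have hmin : ∀ s : Finset A, s.Nonempty → fval s₀ ≤ fval s := fun s hs =>
    hs₀min s (mem_filter.mpr ⟨mem_univ _, hs⟩)
  have hd0 : fval s₀ ≤ 0 := by
    refine le_trans (hmin univ ⟨a₀, mem_univ _⟩) ?_
    have h1 : (nbhd univ).card ≤ Fintype.card B := by
      simpa using card_le_card (filter_subset _ (univ : Finset B))
    have h2 : (univ : Finset A).card = Fintype.card A := rfl
    simp only [hfval, h2]
    have : ((nbhd univ).card : ℤ) ≤ (Fintype.card A : ℤ) := by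
      exact_mod_cast le_trans h1 hcard
    omega
  -- Hall's condition for matching N(s₀) into s₀
  have hall : ∀ T : Finset B, T ⊆ nbhd s₀ →
      T.card ≤ (s₀.filter (fun a => ∃ b ∈ T, E a b)).card := by
    intro T hT
    by_contra hlt
    push_neg at hlt
    set M : Finset A := s₀.filter (fun a => ∃ b ∈ T, E a b) with hM
    set s'' : Finset A := s₀ \ M with hs''
    have hMsub : M ⊆ s₀ := filter_subset _ _
    have hcard'' : s''.card = s₀.card - M.card := card_sdiff_of_subset hMsub
    have hnsub : nbhd s'' ⊆ nbhd s₀ \ T := by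
      intro b hb
      simp only [hnbhd, mem_filter, mem_univ, true_and] at hb
      obtain ⟨a, ha, hEab⟩ := hb
      have has₀ : a ∈ s₀ := (mem_sdiff.mp ha).1
      have haM : a ∉ M := (mem_sdiff.mp ha).2
      refine mem_sdiff.mpr ⟨?_, ?_⟩
      · simp only [hnbhd, mem_filter, mem_univ, true_and]
        exact ⟨a, has₀, hEab⟩
      · intro hbT
        exact haM (mem_filter.mpr ⟨has₀, b, hbT, hEab⟩)
    have hncard : (nbhd s'').card ≤ (nbhd s₀).card - T.card := by
      calc (nbhd s'').card ≤ (nbhd s₀ \ T).card := card_le_card hnsub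
        _ = (nbhd s₀).card - T.card := card_sdiff_of_subset hT
    rcases s''.eq_empty_or_nonempty with he | hne''
    · -- s₀ ⊆ M, so M.card = s₀.card, hence s₀.card < T.card ≤ (nbhd s₀).card
      have hsub : s₀ ⊆ M := by
        intro a ha
        by_contra haM
        exact (notMem_empty a) (he ▸ mem_sdiff.mpr ⟨ha, haM⟩)
      have hMc : M.card = s₀.card := le_antisymm (card_le_card hMsub) (card_le_card hsub)
      have hTc : T.card ≤ (nbhd s₀).card := card_le_card hT
      have : (0 : ℤ) < fval s₀ := by
        simp only [hfval]
        omega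
      omega
    · have := hmin s'' hne''
      have hTle : T.card ≤ (nbhd s₀).card := card_le_card hT
      have hMle : M.card ≤ s₀.card := card_le_card hMsub
      simp only [hfval] at this
      omega
  -- Apply Hall's theorem
  have hallsub : ∀ S : Finset {b : B // b ∈ nbhd s₀},
      S.card ≤ (S.biUnion (fun b => s₀.filter (fun a => E a b.1))).card := by
    intro S
    set T : Finset B := S.image (fun b => b.1) with hT
    have hTsub : T ⊆ nbhd s₀ := by
      intro b hb
      simp only [hT, mem_image] at hb
      obtain ⟨x, _, rfl⟩ := hb
      exact x.2
    have hTcard : T.card = S.card := card_image_of_injective _ Subtype.val_injective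
    have hsub : s₀.filter (fun a => ∃ b ∈ T, E a b) ⊆
        S.biUnion (fun b => s₀.filter (fun a => E a b.1)) := by
      intro a ha
      simp only [mem_filter, hT, mem_image] at ha
      obtain ⟨has₀, b, ⟨x, hxS, rfl⟩, hEab⟩ := ha
      exact mem_biUnion.mpr ⟨x, hxS, mem_filter.mpr ⟨has₀, hEab⟩⟩
    calc S.card = T.card := hTcard.symm
      _ ≤ (s₀.filter (fun a => ∃ b ∈ T, E a b)).card := hall T hTsub
      _ ≤ _ := card_le_card hsub
  obtain ⟨f, hfinj, hf⟩ :=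
    (Finset.all_card_le_biUnion_card_iff_exists_injective
      (fun b : {b : B // b ∈ nbhd s₀} => s₀.filter (fun a => E a b.1))).mp hallsub
  refine ⟨(s₀ : Set A), by exact_mod_cast hs₀ne, ?_⟩
  have hmem : ∀ b : B, b ∈ {b : B | ∃ a ∈ (s₀ : Set A), E a b} ↔ b ∈ nbhd s₀ := by
    intro b
    simp [hnbhd]
  refine ⟨fun b => if h : b ∈ nbhd s₀ then f ⟨b, h⟩ else a₀, ?_, ?_⟩
  · intro b hb
    rw [hmem b] at hb
    simp only [dif_pos hb]
    have := hf ⟨b, hb⟩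
    rw [mem_filter] at this
    exact ⟨this.1, this.2⟩
  · intro b₁ hb₁ b₂ hb₂ heq
    rw [hmem b₁] at hb₁
    rw [hmem b₂] at hb₂
    simp only [dif_pos hb₁, dif_pos hb₂] at heq
    exact Subtype.ext_iff.mp (hfinj heq)
end

section
/- The fractional clique cover number of the graph G₁ on vertex set {1,…,7} with edge set {12, 23, 34, 45, 51, 67, 16, 26, 47} equals 10/3; in particular, assigning weight 1/3 to the cliques {1,2,6}, {3,4}, {4,5}, {4,7} and weight 2/3 to the cliques {1,5}, {2,3}, {6,7} gives a fractional clique cover of G₁ of total weight 10/3. -/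
noncomputable section

/-- `w` is a fractional clique cover of `G`: non-negative weights on the finite subsets of `V`,
supported on cliques, such that every vertex is covered with total weight at least 1. -/
def IsFractionalCliqueCover {V : Type*} [Fintype V] [DecidableEq V]
    (G : SimpleGraph V) (w : Finset V → ℝ) : Prop :=
  (∀ s, 0 ≤ w s) ∧ (∀ s, w s ≠ 0 → G.IsClique ↑s) ∧
    (∀ v : V, 1 ≤ ∑ s : Finset V, if v ∈ s then w s else 0)

/-- The fractional clique cover number of `G`: the minimum total weight of a fractional
clique cover. -/
def fracCliqueCoverNumber {V : Type*} [Fintype V] [DecidableEq V] (G : SimpleGraph V) : ℝ :=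
  sInf {x : ℝ | ∃ w : Finset V → ℝ, IsFractionalCliqueCover G w ∧ x = ∑ s : Finset V, w s}

/-- The graph `G₁` on vertices `{1,…,7}` (here `0,…,6 : Fin 7`) with edges
`12, 23, 34, 45, 51, 67, 16, 26, 47`. -/
def G1 : SimpleGraph (Fin 7) := SimpleGraph.fromRel fun u v =>
  (u = 0 ∧ v = 1) ∨ (u = 1 ∧ v = 2) ∨ (u = 2 ∧ v = 3) ∨ (u = 3 ∧ v = 4) ∨ (u = 4 ∧ v = 0) ∨
  (u = 5 ∧ v = 6) ∨ (u = 0 ∧ v = 5) ∨ (u = 1 ∧ v = 5) ∨ (u = 3 ∧ v = 6)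

/-- The weights assigning `1/3` to the cliques `{1,2,6}, {3,4}, {4,5}, {4,7}` and `2/3` to the
cliques `{1,5}, {2,3}, {6,7}` (vertices `1,…,7` are `0,…,6 : Fin 7`). -/
def w1 : Finset (Fin 7) → ℝ := fun s =>
  if s = {0, 1, 5} ∨ s = {2, 3} ∨ s = {3, 4} ∨ s = {3, 6} then 1/3
  else if s = {0, 4} ∨ s = {1, 2} ∨ s = {5, 6} then 2/3
  else 0

instance : DecidableRel G1.Adj := fun a b => by
  unfold G1; rw [SimpleGraph.fromRel_adj]; infer_instance

/-- The dual (fractional independent set) weights, scaled by 3. -/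
def ny : Fin 7 → ℕ := ![1,1,2,1,2,1,2]

lemma clique_iff (s : Finset (Fin 7)) :
    G1.IsClique ↑s ↔ ∀ u ∈ s, ∀ v ∈ s, u ≠ v → G1.Adj u v := by
  simp [SimpleGraph.isClique_iff, Set.Pairwise]

set_option maxRecDepth 10000 in
lemma dual_bound (s : Finset (Fin 7)) (h : G1.IsClique ↑s) : ∑ v ∈ s, ny v ≤ 3 := by
  rw [clique_iff] at h
  revert h; revert s; decide

/-- The support of `w1`. -/
def T : Finset (Finset (Fin 7)) := {{0,1,5},{2,3},{3,4},{3,6},{0,4},{1,2},{5,6}}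

lemma w1_zero {s : Finset (Fin 7)} (h : s ∉ T) : w1 s = 0 := by
  unfold w1
  split_ifs with h1 h2
  · exact absurd (by simp [T]; tauto) h
  · exact absurd (by simp [T]; tauto) h
  · rfl

lemma sum_w1 : ∑ s : Finset (Fin 7), w1 s = 10/3 := by
  rw [← Finset.sum_subset (Finset.subset_univ T) (fun s _ h => w1_zero h)]
  rw [show T = {{0,1,5},{2,3},{3,4},{3,6},{0,4},{1,2},{5,6}} from rfl]
  rw [Finset.sum_insert (by decide), Finset.sum_insert (by decide),
      Finset.sum_insert (by decide), Finset.sum_insert (by decide),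
      Finset.sum_insert (by decide), Finset.sum_insert (by decide),
      Finset.sum_singleton]
  simp (config := { decide := true }) only [w1]
  norm_num

lemma cover_w1 (v : Fin 7) : 1 ≤ ∑ s : Finset (Fin 7), if v ∈ s then w1 s else 0 := by
  rw [← Finset.sum_subset (Finset.subset_univ T) (fun s _ h => by simp [w1_zero h])]
  rw [show T = {{0,1,5},{2,3},{3,4},{3,6},{0,4},{1,2},{5,6}} from rfl]
  rw [Finset.sum_insert (by decide), Finset.sum_insert (by decide),
      Finset.sum_insert (by decide), Finset.sum_insert (by decide),
      Finset.sum_insert (by decide), Finset.sum_insert (by decide),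
      Finset.sum_singleton]
  fin_cases v <;>
    simp (config := { decide := true }) only [w1] <;> norm_num

set_option maxRecDepth 20000 in
lemma isCover_w1 : IsFractionalCliqueCover G1 w1 := by
  refine ⟨fun s => ?_, fun s hs => ?_, cover_w1⟩
  · unfold w1; split_ifs <;> norm_num
  · have hT : s ∈ T := by
      by_contra h
      exact hs (w1_zero h)
    have : ∀ u ∈ s, ∀ v ∈ s, u ≠ v → G1.Adj u v := by
      clear hs
      revert hT
      revert s
      have : ∀ s ∈ T, ∀ u ∈ s, ∀ v ∈ s, u ≠ v → G1.Adj u v := by decide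
      exact this
    exact (clique_iff s).mpr this

lemma lower_bound (w : Finset (Fin 7) → ℝ) (hw : IsFractionalCliqueCover G1 w) :
    10/3 ≤ ∑ s : Finset (Fin 7), w s := by
  obtain ⟨hnn, hcl, hcov⟩ := hw
  set y : Fin 7 → ℝ := fun v => (ny v : ℝ) / 3 with hy
  have hynn : ∀ v, 0 ≤ y v := fun v => by positivity
  have key : ∀ s : Finset (Fin 7), (∑ v ∈ s, y v) * w s ≤ w s := by
    intro s
    by_cases h0 : w s = 0
    · simp [h0]
    · have hclique := hcl s h0
      have hsum : ∑ v ∈ s, y v ≤ 1 := by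
        have := dual_bound s hclique
        have : (∑ v ∈ s, (ny v : ℝ)) ≤ 3 := by exact_mod_cast this
        rw [hy]
        rw [← Finset.sum_div]
        linarith
      calc (∑ v ∈ s, y v) * w s ≤ 1 * w s :=
            mul_le_mul_of_nonneg_right hsum (hnn s)
        _ = w s := one_mul _
  calc (10 : ℝ)/3 = ∑ v : Fin 7, y v * 1 := by
        simp only [hy, Fin.sum_univ_seven]
        norm_num [show ny 0 = 1 from rfl, show ny 1 = 1 from rfl, show ny 2 = 2 from rfl,
          show ny 3 = 1 from rfl, show ny 4 = 2 from rfl, show ny 5 = 1 from rfl,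
          show ny 6 = 2 from rfl]
    _ ≤ ∑ v : Fin 7, y v * (∑ s : Finset (Fin 7), if v ∈ s then w s else 0) := by
        refine Finset.sum_le_sum fun v _ => ?_
        exact mul_le_mul_of_nonneg_left (hcov v) (hynn v)
    _ = ∑ v : Fin 7, ∑ s : Finset (Fin 7), (if v ∈ s then y v * w s else 0) := by
        refine Finset.sum_congr rfl fun v _ => ?_
        rw [Finset.mul_sum]
        refine Finset.sum_congr rfl fun s _ => ?_
        split_ifs <;> simp
    _ = ∑ s : Finset (Fin 7), ∑ v : Fin 7, (if v ∈ s then y v * w s else 0) :=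
        Finset.sum_comm
    _ = ∑ s : Finset (Fin 7), (∑ v ∈ s, y v) * w s := by
        refine Finset.sum_congr rfl fun s _ => ?_
        rw [Finset.sum_ite_mem, Finset.univ_inter, Finset.sum_mul]
    _ ≤ ∑ s : Finset (Fin 7), w s := Finset.sum_le_sum fun s _ => key s

/-- The fractional clique cover number of `G₁` is `10/3`; in particular the weights `w1` form a
fractional clique cover of `G₁` of total weight `10/3`. -/
theorem fracCliqueCoverNumber_G1 :
    fracCliqueCoverNumber G1 = 10/3 ∧
    IsFractionalCliqueCover G1 w1 ∧ ∑ s : Finset (Fin 7), w1 s = 10/3 := by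
  have hmem : (10:ℝ)/3 ∈
      {x : ℝ | ∃ w : Finset (Fin 7) → ℝ, IsFractionalCliqueCover G1 w ∧
        x = ∑ s : Finset (Fin 7), w s} :=
    ⟨w1, isCover_w1, sum_w1.symm⟩
  refine ⟨le_antisymm ?_ ?_, isCover_w1, sum_w1⟩
  · exact csInf_le ⟨10/3, fun x ⟨w, hw, hx⟩ => hx ▸ lower_bound w hw⟩ hmem
  · exact le_csInf ⟨10/3, hmem⟩ fun x ⟨w, hw, hx⟩ => hx ▸ lower_bound w hw

end
end
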